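/- Let f : ℝ^d → ℝ be twice continuously differentiable with M₀ := sup_y |f(y)|, M₁ := sup_y |∇f(y)|, and M₂ := sup_{y,i,j} |∂²f/∂y_i∂y_j (y)| all finite. For z₀ ∈ ℝ^d and r > 0 define f_{z₀,r}(y) := f((y − z₀)/r). Then for every y ∈ ℝ^d the function z ↦ f_{z₀,r}(y+z) − f_{z₀,r}(y) − ⟨∇f_{z₀,r}(y), z⟩·1_{|z|≤1} is ν-integrable, and the generator expression 𝓛 f_{z₀,r}(y) := (1/2) ∑_{i,j=1}^d a_{ij} ∂²f_{z₀,r}/∂y_i∂y_j (y) + ⟨b, ∇f_{z₀,r}(y)⟩ + ∫_{ℝ^d∖{0}} ( f_{z₀,r}(y+z) − f_{z₀,r}(y) − ⟨∇f_{z₀,r}(y), z⟩·1_{|z|≤1} ) ν(dz) satisfies |𝓛 f_{z₀,r}(y)| ≤ (d·M₂ + M₁ + 2·M₀) · Φ(r) for all y ∈ ℝ^d, z₀ ∈ ℝ^d, and r > 0. -/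

import Mathlib

open MeasureTheory ProbabilityTheory Filter Set Topology Metric RealInnerProductSpace
open scoped ENNReal NNReal

noncomputable section

abbrev Euc (d : ℕ) : Type := EuclideanSpace ℝ (Fin d)

/-- First exit time from `B` of the process started at `x`, valued in `[0,∞]`
(`∞` if the process never leaves `B`). -/
def exitTime {Ω : Type} {d : ℕ} (Y : ℝ → Ω → Euc d) (x : Euc d) (B : Set (Euc d)) (ω : Ω) :
    ℝ≥0∞ :=
  sInf (ENNReal.ofReal '' {t : ℝ | 0 ≤ t ∧ x + Y t ω ∉ B})

/-- `E_x[τ_B]`, the expected exit time from `B` for the process started at `x`. -/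
def expExit {Ω : Type} [MeasurableSpace Ω] {d : ℕ} (P : Measure Ω) (Y : ℝ → Ω → Euc d)
    (x : Euc d) (B : Set (Euc d)) : ℝ≥0∞ :=
  ∫⁻ ω, exitTime Y x B ω ∂P

/-- `h(X_{τ_B})` on the event `{τ_B < ∞}` (and `0` elsewhere), as an `ℝ≥0∞`-valued quantity. -/
def stopVal {Ω : Type} {d : ℕ} (Y : ℝ → Ω → Euc d) (h : Euc d → ℝ) (x : Euc d)
    (B : Set (Euc d)) (ω : Ω) : ℝ≥0∞ :=
  if exitTime Y x B ω < ⊤ then ENNReal.ofReal (h (x + Y (exitTime Y x B ω).toReal ω)) else 0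

/-- `E_x[h(X_{τ_B})]` for a nonnegative `h`. -/
def expStop {Ω : Type} [MeasurableSpace Ω] {d : ℕ} (P : Measure Ω) (Y : ℝ → Ω → Euc d)
    (h : Euc d → ℝ) (x : Euc d) (B : Set (Euc d)) : ℝ≥0∞ :=
  ∫⁻ ω, stopVal Y h x B ω ∂P

/-- `h` is harmonic in the open set `U` with respect to the process `x + Y`. -/
def HarmonicOn {Ω : Type} [MeasurableSpace Ω] {d : ℕ} (P : Measure Ω) (Y : ℝ → Ω → Euc d)
    (h : Euc d → ℝ) (U : Set (Euc d)) : Prop :=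
  ∀ B : Set (Euc d), IsOpen B → IsCompact (closure B) → closure B ⊆ U → ∀ x ∈ B,
    expStop P Y h x B ≠ ⊤ ∧ ENNReal.ofReal (h x) = expStop P Y h x B

/-- `h` vanishes continuously on `E`: it is zero on `E` and continuous at every point of `E`. -/
def VanishesContinuouslyOn {d : ℕ} (h : Euc d → ℝ) (E : Set (Euc d)) : Prop :=
  (∀ z ∈ E, h z = 0) ∧ ∀ z ∈ E, ContinuousAt h z

/-- A Lévy-like process: starts at `0`, a.s. càdlàg paths,
stationary and independent increments. -/
structure IsLevyLike {Ω : Type} [MeasurableSpace Ω] {d : ℕ} (P : Measure Ω)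
    (Y : ℝ → Ω → Euc d) : Prop where
  isProb : IsProbabilityMeasure P
  meas : ∀ t : ℝ, Measurable (Y t)
  start : ∀ᵐ ω ∂P, Y 0 ω = 0
  rightCont : ∀ᵐ ω ∂P, ∀ t : ℝ, 0 ≤ t → ContinuousWithinAt (fun s => Y s ω) (Ici t) t
  leftLim : ∀ᵐ ω ∂P, ∀ t : ℝ, 0 < t → ∃ L, Tendsto (fun s => Y s ω) (𝓝[<] t) (𝓝 L)
  statInc : ∀ s t : ℝ, 0 ≤ s → s ≤ t →
    P.map (fun ω => Y t ω - Y s ω) = P.map (fun ω => Y (t - s) ω)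
  indInc : ∀ n : ℕ, ∀ τ : Fin (n + 1) → ℝ, Monotone τ → 0 ≤ τ 0 →
    iIndepFun
      (fun i : Fin n => fun ω => Y (τ i.succ) ω - Y (τ i.castSucc) ω) P

/-- The process `Y` has characteristic exponent `ψ`:
`E[exp(i⟪u, Y_t⟫)] = exp(t ψ(u))`. -/
def HasCharExponent {Ω : Type} [MeasurableSpace Ω] {d : ℕ} (P : Measure Ω)
    (Y : ℝ → Ω → Euc d) (ψ : Euc d → ℂ) : Prop :=
  ∀ u : Euc d, ∀ t : ℝ, 0 ≤ t →
    ∫ ω, Complex.exp (Complex.I * (⟪u, Y t ω⟫ : ℂ)) ∂P = Complex.exp ((t : ℂ) * ψ u)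

/-- Laplace exponent `φ(s) = s + ∫₀^∞ (1 - e^{-st}) μ(dt)` (unit drift). -/
def laplaceExp (μm : Measure ℝ) (s : ℝ) : ℝ :=
  s + ∫ t, (1 - Real.exp (-(s * t))) ∂μm

/-- `μm` is a nonzero Lévy measure of a subordinator: carried by `(0,∞)` and
`∫ (1 ∧ t) μ(dt) < ∞`. -/
def IsLevyMeasure1D (μm : Measure ℝ) : Prop :=
  μm ≠ 0 ∧ μm (Iic 0) = 0 ∧ (∫⁻ t, ENNReal.ofReal (min 1 t) ∂μm) < ⊤

/-- `μm` has a density `ρ` w.r.t. Lebesgue measure with `ρ(t) ≤ c ρ(2t)` on `(0,8)` and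
`ρ(t) ≤ c ρ(t+1)` on `(1,∞)`. -/
def HasGoodDensity (μm : Measure ℝ) : Prop :=
  ∃ ρ : ℝ → ℝ, Measurable ρ ∧ (∀ t, 0 ≤ ρ t) ∧
    μm = volume.withDensity (fun t => ENNReal.ofReal (ρ t)) ∧
    ∃ c : ℝ, 0 < c ∧ (∀ t ∈ Ioo (0 : ℝ) 8, ρ t ≤ c * ρ (2 * t)) ∧
      ∀ t ∈ Ioi (1 : ℝ), ρ t ≤ c * ρ (t + 1)

/-- Subordinate Brownian motion with Gaussian component and Laplace exponent `φ`:
a Lévy-like process with `E[exp(i⟪u, Y_t⟫)] = exp(-t φ(|u|²))`. -/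
def IsSubordinateBM {Ω : Type} [MeasurableSpace Ω] {d : ℕ} (P : Measure Ω)
    (Y : ℝ → Ω → Euc d) (φ : ℝ → ℝ) : Prop :=
  IsLevyLike P Y ∧ HasCharExponent P Y fun u => ((-(φ (‖u‖ ^ 2)) : ℝ) : ℂ)

/-- Identification of `ℝ^{d-1} × ℝ` with `ℝ^d` (the last coordinate being the real factor). -/
def embedPair (d : ℕ) (p : EuclideanSpace ℝ (Fin (d - 1)) × ℝ) : Euc d :=
  (EuclideanSpace.equiv (Fin d) ℝ).symm fun i => if h : (i : ℕ) < d - 1 then p.1 ⟨i, h⟩ else p.2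

/-- `D` is a Lipschitz domain with characteristics `(R₀, Λ₀)`. -/
def IsLipschitzDomain (d : ℕ) (D : Set (Euc d)) (R₀ Λ₀ : ℝ) : Prop :=
  IsOpen D ∧ IsConnected D ∧
    ∀ z ∈ frontier D, ∃ O : Euc d ≃ₗᵢ[ℝ] Euc d, ∃ ψ : EuclideanSpace ℝ (Fin (d - 1)) → ℝ,
      LipschitzWith Λ₀.toNNReal ψ ∧ ψ 0 = 0 ∧
      ball z R₀ ∩ D =
        (fun p : EuclideanSpace ℝ (Fin (d - 1)) × ℝ => z + O (embedPair d p)) ''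
          {p | ‖embedPair d p‖ < R₀ ∧ ψ p.1 < p.2}

/-- The last coordinate of a vector in `ℝ^d` (junk value `0` if `d = 0`). -/
def lastCoord {d : ℕ} (x : Euc d) : ℝ :=
  if h : 0 < d then x ⟨d - 1, Nat.sub_lt h Nat.one_pos⟩ else 0

/-- The truncated circular cone `Γ_θ(r)` with vertex `0`, angle `θ` and axis along the
positive last-coordinate direction. -/
def cone (d : ℕ) (θ r : ℝ) : Set (Euc d) :=
  {x | ‖x‖ < r ∧ ‖x‖ * Real.cos θ < lastCoord x}

/-- `D` satisfies the interior cone condition with common angle `θ`. -/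
def InteriorConeCondition (d : ℕ) (D : Set (Euc d)) (θ : ℝ) : Prop :=
  ∃ a₀ : ℝ, 0 < a₀ ∧ ∀ z ∈ frontier D, ∃ R : Euc d ≃ₗᵢ[ℝ] Euc d,
    LinearEquiv.det R.toLinearEquiv = 1 ∧ (fun y => z + R y) '' cone d θ a₀ ⊆ D


/-- `D` is a `C¹` domain (with a uniform modulus of continuity for the gradients of the
local boundary functions). -/
def IsC1Domain (d : ℕ) (D : Set (Euc d)) : Prop :=
  IsOpen D ∧ IsConnected D ∧
    ∃ R₀ : ℝ, 0 < R₀ ∧ ∃ f : ℝ → ℝ, (∀ s, 0 ≤ f s) ∧ f 0 = 0 ∧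
      Tendsto f (𝓝[>] 0) (𝓝 0) ∧
      ∀ z ∈ frontier D, ∃ O : Euc d ≃ₗᵢ[ℝ] Euc d, ∃ ψ : EuclideanSpace ℝ (Fin (d - 1)) → ℝ,
        ContDiff ℝ 1 ψ ∧ ψ 0 = 0 ∧ fderiv ℝ ψ 0 = 0 ∧
        (∀ a b : EuclideanSpace ℝ (Fin (d - 1)), ‖fderiv ℝ ψ a - fderiv ℝ ψ b‖ ≤ f ‖a - b‖) ∧
        ball z R₀ ∩ D =
          (fun p : EuclideanSpace ℝ (Fin (d - 1)) × ℝ => z + O (embedPair d p)) ''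
            {p | ‖embedPair d p‖ < R₀ ∧ ψ p.1 < p.2}

/-- The event that the process started at `x` leaves `B` in finite time and lands in `A`
at the exit time. -/
def exitEvent {Ω : Type} {d : ℕ} (Y : ℝ → Ω → Euc d) (x : Euc d) (B A : Set (Euc d)) :
    Set Ω :=
  {ω | exitTime Y x B ω < ⊤ ∧ x + Y (exitTime Y x B ω).toReal ω ∈ A}

/-- The hitting time `inf { t > 0 : x + Y_t ∈ A }`, valued in `[0,∞]`. -/
def hitTime {Ω : Type} {d : ℕ} (Y : ℝ → Ω → Euc d) (x : Euc d) (A : Set (Euc d)) (ω : Ω) :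
    ℝ≥0∞ :=
  sInf (ENNReal.ofReal '' {t : ℝ | 0 < t ∧ x + Y t ω ∈ A})

def quadForm (d : ℕ) (A : Matrix (Fin d) (Fin d) ℝ) (u : Euc d) : ℝ :=
  ∑ i, ∑ j, u i * A i j * u j

/-- `(A, b, ν)` is a Lévy triple: `A` symmetric nonnegative-definite, and
`ν` a measure on `ℝ^d ∖ {0}` with `∫ (|z|² ∧ 1) ν(dz) < ∞`. -/
def IsLevyTriple (d : ℕ) (A : Matrix (Fin d) (Fin d) ℝ) (b : Euc d)
    (ν : Measure (Euc d)) : Prop :=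
  A.IsSymm ∧ (∀ u : Euc d, 0 ≤ quadForm d A u) ∧ ν {0} = 0 ∧
    (∫⁻ z, ENNReal.ofReal (min (‖z‖ ^ 2) 1) ∂ν) < ⊤

/-- The Lévy–Khintchine exponent `ψ` of the triple `(A, b, ν)`. -/
def levyExponent (d : ℕ) (A : Matrix (Fin d) (Fin d) ℝ) (b : Euc d) (ν : Measure (Euc d))
    (u : Euc d) : ℂ :=
  -(1 / 2 : ℂ) * (quadForm d A u : ℂ) + Complex.I * (⟪b, u⟫ : ℂ) +
    ∫ z, (Complex.exp (Complex.I * (⟪u, z⟫ : ℂ)) - 1 -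
      (if ‖z‖ ≤ 1 then Complex.I * (⟪u, z⟫ : ℂ) else 0)) ∂ν

/-- The truncated drift `b̃_r`. -/
def btilde {d : ℕ} (b : Euc d) (ν : Measure (Euc d)) (r : ℝ) : Euc d :=
  if r ≤ 1 then b - ∫ z in {z : Euc d | r < ‖z‖ ∧ ‖z‖ ≤ 1}, z ∂ν
  else b + ∫ z in {z : Euc d | 1 < ‖z‖ ∧ ‖z‖ ≤ r}, z ∂ν

/-- Pruitt's function
`Φ(r) = r^{-2} ∑ a_{ii} + ∫ ((|z|²/r²) ∧ 1) ν(dz) + |b̃_r|/r`. -/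
def Phi (d : ℕ) (A : Matrix (Fin d) (Fin d) ℝ) (b : Euc d) (ν : Measure (Euc d))
    (r : ℝ) : ℝ :=
  (∑ i, A i i) / r ^ 2 + (∫ z, min (‖z‖ ^ 2 / r ^ 2) 1 ∂ν) + ‖btilde b ν r‖ / r

/-- The running maximum `M_t = sup_{0 ≤ s ≤ t} |Y_s|`. -/
def runMax {Ω : Type} {d : ℕ} (Y : ℝ → Ω → Euc d) (t : ℝ) (ω : Ω) : ℝ :=
  sSup {x : ℝ | ∃ s : ℝ, 0 ≤ s ∧ s ≤ t ∧ x = ‖Y s ω‖}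

/-- `Y` is a Lévy process with Lévy triple `(A, b, ν)`:
a Lévy-like process with characteristic exponent the Lévy–Khintchine exponent of `(A, b, ν)`. -/
def IsLevyProcess {Ω : Type} [MeasurableSpace Ω] {d : ℕ} (P : Measure Ω)
    (Y : ℝ → Ω → Euc d) (A : Matrix (Fin d) (Fin d) ℝ) (b : Euc d)
    (ν : Measure (Euc d)) : Prop :=
  IsLevyLike P Y ∧ HasCharExponent P Y (levyExponent d A b ν)

/-- First exit time from `B` of a process `W` (which carries its own starting point). -/
def exitTimeW {Ω : Type} {d : ℕ} (W : ℝ → Ω → Euc d) (B : Set (Euc d)) (ω : Ω) : ℝ≥0∞ :=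
  sInf (ENNReal.ofReal '' {t : ℝ | 0 ≤ t ∧ W t ω ∉ B})

/-- `W` is a Brownian motion on `ℝ^d` with generator `Δ` started at `x`:
`W_0 = x` a.s., continuous sample paths, stationary independent increments, and
`E[exp(i⟪u, W_t − W_0⟫)] = exp(−t|u|²)`. -/
def IsBM {Ω : Type} [MeasurableSpace Ω] {d : ℕ} (P : Measure Ω) (W : ℝ → Ω → Euc d)
    (x : Euc d) : Prop :=
  IsProbabilityMeasure P ∧ (∀ t : ℝ, Measurable (W t)) ∧ (∀ᵐ ω ∂P, W 0 ω = x) ∧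
    (∀ᵐ ω ∂P, ContinuousOn (fun t => W t ω) (Ici 0)) ∧
    (∀ s t : ℝ, 0 ≤ s → s ≤ t →
      P.map (fun ω => W t ω - W s ω) = P.map (fun ω => W (t - s) ω - W 0 ω)) ∧
    (∀ n : ℕ, ∀ τ : Fin (n + 1) → ℝ, Monotone τ → 0 ≤ τ 0 →
      iIndepFun
        (fun i : Fin n => fun ω => W (τ i.succ) ω - W (τ i.castSucc) ω) P) ∧
    ∀ u : Euc d, ∀ t : ℝ, 0 ≤ t →
      ∫ ω, Complex.exp (Complex.I * (⟪u, W t ω - W 0 ω⟫ : ℂ)) ∂P =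
        Complex.exp (((-(t * ‖u‖ ^ 2)) : ℝ) : ℂ)

/-- The rescaled function `f_{z₀,r}(y) = f((y − z₀)/r)`. -/
def rescale {d : ℕ} (f : Euc d → ℝ) (z₀ : Euc d) (r : ℝ) : Euc d → ℝ :=
  fun w => f (r⁻¹ • (w - z₀))

/-!
Split the generator at the scale `r` instead of `1`. Moving the compensator from `‖z‖ ≤ 1` to
`‖z‖ ≤ r` shifts `± ∫ z ν(dz)` over the annulus between `r` and `1` into the drift, turning
`b` into `b̃_r`. Each of the three resulting terms is then bounded by the matching term of
`Φ(r)`: the diffusion term through `|a_ij| ≤ (a_ii + a_jj) / 2` and `|∂²f_{z₀,r}| ≤ M₂ / r²`,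
the drift through `‖∇f_{z₀,r}‖ ≤ M₁ / r`, and the jump integrand by `d M₂ ‖z‖² / r²`
(second-order Taylor, with `‖D²f‖ ≤ d M₂`) for `‖z‖ ≤ r` and by `2 M₀` otherwise.
-/

namespace EuclideanSpace

variable {ι : Type*} [Fintype ι] [DecidableEq ι]

theorem opNorm_le_sqrt_card_mul_of_abs_apply_single_le (L : EuclideanSpace ℝ ι →L[ℝ] ℝ)
    {c : ℝ} (hc : 0 ≤ c) (h : ∀ i, |L (single i 1)| ≤ c) :
    ‖L‖ ≤ √(Fintype.card ι) * c := by
  set v := (InnerProductSpace.toDual ℝ (EuclideanSpace ℝ ι)).symm L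
  have hv : ∀ i, v i = L (single i 1) := fun i => by
    rw [← InnerProductSpace.toDual_symm_apply, inner_single_right]; simp [v]
  calc ‖L‖ = ‖v‖ := (LinearIsometryEquiv.norm_map _ L).symm
    _ = √(∑ i, ‖v i‖ ^ 2) := norm_eq v
    _ ≤ √(∑ _ : ι, c ^ 2) := by
        gcongr with i
        rw [hv, Real.norm_eq_abs]
        exact h i
    _ = √(Fintype.card ι) * c := by
        simp [Real.sqrt_mul, Real.sqrt_sq hc]

theorem opNorm_le_card_mul_of_abs_apply_single_single_le
    (B : EuclideanSpace ℝ ι →L[ℝ] EuclideanSpace ℝ ι →L[ℝ] ℝ) {c : ℝ}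
    (h : ∀ i j, |B (single i 1) (single j 1)| ≤ c) :
    ‖B‖ ≤ Fintype.card ι * c := by
  rcases isEmpty_or_nonempty ι with hι | ⟨⟨i₀⟩⟩
  · simp [Subsingleton.elim B 0]
  have hc : 0 ≤ c := (abs_nonneg _).trans (h i₀ i₀)
  have hrow : ∀ j, ‖B.flip (single j 1)‖ ≤ √(Fintype.card ι) * c := fun j =>
    opNorm_le_sqrt_card_mul_of_abs_apply_single_le _ hc fun i => h i j
  refine B.opNorm_le_bound (by positivity) fun u => ?_
  calc ‖B u‖ ≤ √(Fintype.card ι) * (√(Fintype.card ι) * c * ‖u‖) :=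
        opNorm_le_sqrt_card_mul_of_abs_apply_single_le _ (by positivity) fun j =>
          (B.flip (single j 1)).le_of_opNorm_le (hrow j) u
    _ = Fintype.card ι * c * ‖u‖ := by
        rw [← mul_assoc, ← mul_assoc, Real.mul_self_sqrt (Nat.cast_nonneg _), mul_assoc]

end EuclideanSpace

section QuadForm

variable {d : ℕ} {A : Matrix (Fin d) (Fin d) ℝ}

theorem quadForm_single_add_smul_single (i j : Fin d) (t : ℝ) :
    quadForm d A (EuclideanSpace.single i 1 + t • EuclideanSpace.single j 1) =
      A i i + t * (A i j + A j i) + t ^ 2 * A j j := by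
  simp only [quadForm, PiLp.add_apply, PiLp.smul_apply, PiLp.single_apply, smul_eq_mul]
  simp only [add_mul, mul_add, Finset.sum_add_distrib, ite_mul, mul_ite, Finset.sum_ite_eq',
    Finset.mem_univ, if_true, one_mul, mul_one, zero_mul, mul_zero]
  ring

theorem abs_apply_le_of_quadForm_nonneg (hs : A.IsSymm) (hA : ∀ u, 0 ≤ quadForm d A u)
    (i j : Fin d) : |A i j| ≤ (A i i + A j j) / 2 := by
  have hplus := hA (EuclideanSpace.single i 1 + (1 : ℝ) • EuclideanSpace.single j 1)
  have hminus := hA (EuclideanSpace.single i 1 + (-1 : ℝ) • EuclideanSpace.single j 1)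
  rw [quadForm_single_add_smul_single, hs.apply i j] at hplus hminus
  rw [abs_le]
  constructor <;> linarith

theorem sum_diag_nonneg_of_quadForm_nonneg (hA : ∀ u, 0 ≤ quadForm d A u) :
    0 ≤ ∑ i, A i i :=
  Finset.sum_nonneg fun i _ => by
    have := hA (EuclideanSpace.single i 1 + (0 : ℝ) • EuclideanSpace.single i 1)
    rw [quadForm_single_add_smul_single] at this
    simpa using this

theorem abs_sum_mul_le_of_quadForm_nonneg (hs : A.IsSymm) (hA : ∀ u, 0 ≤ quadForm d A u)
    {H : Fin d → Fin d → ℝ} {c : ℝ} (hH : ∀ i j, |H i j| ≤ c) :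
    |∑ i, ∑ j, A i j * H i j| ≤ d * (∑ i, A i i) * c := by
  have hentry := abs_apply_le_of_quadForm_nonneg hs hA
  calc |∑ i, ∑ j, A i j * H i j| ≤ ∑ i, ∑ j, |A i j * H i j| :=
        (Finset.abs_sum_le_sum_abs _ _).trans
          (Finset.sum_le_sum fun i _ => Finset.abs_sum_le_sum_abs _ _)
    _ ≤ ∑ i, ∑ j, (A i i + A j j) / 2 * c := by
        gcongr with i _ j _
        rw [abs_mul]
        exact mul_le_mul (hentry i j) (hH i j) (abs_nonneg _) ((abs_nonneg _).trans (hentry i j))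
    _ = d * (∑ i, A i i) * c := by
        simp only [add_div, add_mul, Finset.sum_add_distrib, Finset.sum_const, Finset.card_univ,
          Fintype.card_fin, nsmul_eq_mul, ← Finset.sum_mul, ← Finset.sum_div, ← Finset.mul_sum]
        ring

end QuadForm

section Taylor

variable {E F : Type*} [NormedAddCommGroup E] [NormedSpace ℝ E] [NormedAddCommGroup F]
  [NormedSpace ℝ F]

theorem norm_image_add_sub_sub_fderiv_le {f : E → F} (hf : ContDiff ℝ 2 f) {C : ℝ}
    (hC : ∀ x, ‖fderiv ℝ (fderiv ℝ f) x‖ ≤ C) (x h : E) :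
    ‖f (x + h) - f x - fderiv ℝ f x h‖ ≤ C * ‖h‖ ^ 2 := by
  have hdf : Differentiable ℝ (fderiv ℝ f) := (hf.fderiv_right le_rfl).differentiable one_ne_zero
  have hslope : ∀ w ∈ closedBall x ‖h‖, ‖fderiv ℝ f w - fderiv ℝ f x‖ ≤ C * ‖h‖ := fun w hw =>
    calc ‖fderiv ℝ f w - fderiv ℝ f x‖ ≤ C * ‖w - x‖ :=
          convex_univ.norm_image_sub_le_of_norm_fderiv_le (fun z _ => hdf z)
            (fun z _ => hC z) (mem_univ x) (mem_univ w)
      _ ≤ C * ‖h‖ := by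
          gcongr
          · exact (norm_nonneg (fderiv ℝ (fderiv ℝ f) x)).trans (hC x)
          · exact mem_closedBall_iff_norm.mp hw
  have hxh : x + h ∈ closedBall x ‖h‖ := by simp
  have := (convex_closedBall x ‖h‖).norm_image_sub_le_of_norm_fderiv_le'
    (fun z _ => (hf.differentiable two_ne_zero) z) hslope (mem_closedBall_self (norm_nonneg h)) hxh
  simpa [pow_two, mul_assoc] using this

end Taylor

section Rescale

variable {d : ℕ} {f : Euc d → ℝ} {z₀ : Euc d} {r : ℝ}

theorem hasFDerivAt_rescale (hf : Differentiable ℝ f) (w : Euc d) :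
    HasFDerivAt (rescale f z₀ r) (r⁻¹ • fderiv ℝ f (r⁻¹ • (w - z₀))) w := by
  have := (hf _).hasFDerivAt.comp w (((hasFDerivAt_id w).sub_const z₀).const_smul r⁻¹)
  exact this.congr_fderiv (by ext; simp)

theorem fderiv_rescale (hf : Differentiable ℝ f) :
    fderiv ℝ (rescale f z₀ r) = fun w => r⁻¹ • fderiv ℝ f (r⁻¹ • (w - z₀)) :=
  funext fun w => (hasFDerivAt_rescale hf w).fderiv

theorem fderiv_fderiv_rescale_apply (hf : ContDiff ℝ 2 f) (w u v : Euc d) :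
    fderiv ℝ (fderiv ℝ (rescale f z₀ r)) w u v =
      r⁻¹ ^ 2 * fderiv ℝ (fderiv ℝ f) (r⁻¹ • (w - z₀)) u v := by
  have hdf : Differentiable ℝ (fderiv ℝ f) := (hf.fderiv_right le_rfl).differentiable one_ne_zero
  have : HasFDerivAt (fun w => r⁻¹ • fderiv ℝ f (r⁻¹ • (w - z₀)))
      (r⁻¹ • (fderiv ℝ (fderiv ℝ f) (r⁻¹ • (w - z₀))).comp (r⁻¹ • ContinuousLinearMap.id ℝ _)) w :=
    ((hdf _).hasFDerivAt.comp w (((hasFDerivAt_id w).sub_const z₀).const_smul r⁻¹)).const_smul r⁻¹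
  rw [fderiv_rescale (hf.differentiable two_ne_zero), this.fderiv]
  simp only [smul_apply, ContinuousLinearMap.comp_apply,
    ContinuousLinearMap.id_apply, map_smul, smul_eq_mul]
  ring

theorem abs_fderiv_rescale_apply_le (hf : Differentiable ℝ f) (hr : 0 < r) {M : ℝ}
    (hM : ∀ x, ‖fderiv ℝ f x‖ ≤ M) (w v : Euc d) :
    |fderiv ℝ (rescale f z₀ r) w v| ≤ M * (‖v‖ / r) := by
  rw [fderiv_rescale hf, smul_apply, smul_eq_mul, abs_mul,
    abs_of_pos (inv_pos.mpr hr), ← Real.norm_eq_abs, inv_mul_eq_div, mul_div_assoc']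
  gcongr
  exact (fderiv ℝ f _).le_of_opNorm_le (hM _) v

theorem abs_fderiv_fderiv_rescale_le (hf : ContDiff ℝ 2 f) {u v : Euc d} {M : ℝ}
    (hM : ∀ x, |fderiv ℝ (fderiv ℝ f) x u v| ≤ M) (w : Euc d) :
    |fderiv ℝ (fderiv ℝ (rescale f z₀ r)) w u v| ≤ M / r ^ 2 := by
  rw [fderiv_fderiv_rescale_apply hf, abs_mul, abs_of_nonneg (by positivity), inv_pow,
    inv_mul_eq_div]
  gcongr
  exact hM _

theorem abs_rescale_add_sub_sub_fderiv_le (hf : ContDiff ℝ 2 f) {C : ℝ}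
    (hC : ∀ x, ‖fderiv ℝ (fderiv ℝ f) x‖ ≤ C) (hr : 0 < r) (y z : Euc d) :
    |rescale f z₀ r (y + z) - rescale f z₀ r y - fderiv ℝ (rescale f z₀ r) y z| ≤
      C / r ^ 2 * ‖z‖ ^ 2 := by
  have := norm_image_add_sub_sub_fderiv_le hf hC (r⁻¹ • (y - z₀)) (r⁻¹ • z)
  rw [norm_smul, norm_inv, Real.norm_of_nonneg hr.le] at this
  calc _ = |f (r⁻¹ • (y - z₀) + r⁻¹ • z) - f (r⁻¹ • (y - z₀)) -
        fderiv ℝ f (r⁻¹ • (y - z₀)) (r⁻¹ • z)| := by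
          simp [rescale, fderiv_rescale (hf.differentiable two_ne_zero), add_sub_right_comm,
            smul_add]
    _ ≤ C * (r⁻¹ * ‖z‖) ^ 2 := this
    _ = C / r ^ 2 * ‖z‖ ^ 2 := by ring

end Rescale

/-- The jump integrand of the generator with the compensator truncated at radius `c`; the
generator itself uses `c = 1`. -/
def jumpIntegrand {E : Type*} [NormedAddCommGroup E] [NormedSpace ℝ E] (g : E → ℝ) (y : E)
    (c : ℝ) (z : E) : ℝ :=
  g (y + z) - g y - if ‖z‖ ≤ c then fderiv ℝ g y z else 0

theorem abs_jumpIntegrand_le {E : Type*} [NormedAddCommGroup E] [NormedSpace ℝ E]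
    {g : E → ℝ} {y : E} {c K M : ℝ} (hc : 0 < c) (hM : ∀ w, |g w| ≤ M)
    (hK : ∀ z, |g (y + z) - g y - fderiv ℝ g y z| ≤ K * ‖z‖ ^ 2) (z : E) :
    |jumpIntegrand g y c z| ≤ (K * c ^ 2 + 2 * M) * min (‖z‖ ^ 2 / c ^ 2) 1 := by
  have hM0 : 0 ≤ M := (abs_nonneg _).trans (hM y)
  unfold jumpIntegrand
  split_ifs with hz
  · have hle : ‖z‖ ^ 2 / c ^ 2 ≤ 1 := (div_le_one (by positivity)).mpr (by gcongr)
    rw [min_eq_left hle]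
    calc |g (y + z) - g y - fderiv ℝ g y z| ≤ K * ‖z‖ ^ 2 := hK z
      _ = K * c ^ 2 * (‖z‖ ^ 2 / c ^ 2) := by field_simp
      _ ≤ (K * c ^ 2 + 2 * M) * (‖z‖ ^ 2 / c ^ 2) := by gcongr; linarith
  · rw [not_le] at hz
    have hge : 1 ≤ ‖z‖ ^ 2 / c ^ 2 := (one_le_div (by positivity)).mpr (by gcongr)
    have hK0 : 0 ≤ K := by
      have := (abs_nonneg _).trans (hK z)
      exact nonneg_of_mul_nonneg_left this (pow_pos (hc.trans hz) 2)
    rw [min_eq_right hge, sub_zero, mul_one]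
    calc |g (y + z) - g y| ≤ |g (y + z)| + |g y| := abs_sub _ _
      _ ≤ K * c ^ 2 + 2 * M := by linarith [hM (y + z), hM y, mul_nonneg hK0 (sq_nonneg c)]

theorem abs_integral_le_mul_integral_of_abs_le {α : Type*} [MeasurableSpace α] {μ : Measure α}
    {F G : α → ℝ} (hG : Integrable G μ) {K : ℝ} (h : ∀ x, |F x| ≤ K * G x) :
    |∫ x, F x ∂μ| ≤ K * ∫ x, G x ∂μ := by
  rw [← Real.norm_eq_abs, ← integral_const_mul]
  exact norm_integral_le_of_norm_le (hG.const_mul K) (ae_of_all _ h)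

section LevyMeasure

variable {d : ℕ} {ν : Measure (Euc d)}

theorem integrable_min_sq_div_sq (hν : ∫⁻ z, ENNReal.ofReal (min (‖z‖ ^ 2) 1) ∂ν < ⊤)
    (c : ℝ) : Integrable (fun z : Euc d => min (‖z‖ ^ 2 / c ^ 2) 1) ν := by
  have hint : Integrable (fun z : Euc d => min (‖z‖ ^ 2) 1) ν := by
    refine ⟨((continuous_norm.pow 2).min continuous_const).aestronglyMeasurable, ?_⟩
    rw [hasFiniteIntegral_iff_ofReal (ae_of_all _ fun z => by positivity)]
    exact hν
  refine (hint.const_mul (max (c ^ 2)⁻¹ 1)).mono'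
    (((continuous_norm.pow 2).div_const _).min continuous_const).aestronglyMeasurable
    (ae_of_all _ fun z => ?_)
  rw [Real.norm_eq_abs, abs_of_nonneg (by positivity)]
  rcases le_total (‖z‖ ^ 2) 1 with h | h
  · rw [min_eq_left h, div_eq_inv_mul]
    exact (min_le_left _ _).trans (by gcongr; exact le_max_left _ _)
  · rw [min_eq_right h, mul_one]
    exact (min_le_right _ _).trans (le_max_right _ _)

theorem integrable_jumpIntegrand (hν : ∫⁻ z, ENNReal.ofReal (min (‖z‖ ^ 2) 1) ∂ν < ⊤)
    {g : Euc d → ℝ} (hg : Continuous g) {y : Euc d} {c K : ℝ}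
    (hK : ∀ z, |jumpIntegrand g y c z| ≤ K * min (‖z‖ ^ 2 / c ^ 2) 1) :
    Integrable (jumpIntegrand g y c) ν := by
  have hmeas : AEStronglyMeasurable (jumpIntegrand g y c) ν :=
    (((hg.comp (continuous_const_add y)).sub continuous_const).measurable.sub
      (Measurable.ite (measurableSet_le measurable_norm measurable_const)
        (fderiv ℝ g y).continuous.measurable measurable_const)).aestronglyMeasurable
  exact ((integrable_min_sq_div_sq hν c).const_mul K).mono' hmeas (ae_of_all _ hK)

theorem measurableSet_annulus (s t : ℝ) : MeasurableSet {z : Euc d | s < ‖z‖ ∧ ‖z‖ ≤ t} :=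
  (measurableSet_lt measurable_const measurable_norm).inter
    (measurableSet_le measurable_norm measurable_const)

theorem integrableOn_annulus (hν : ∫⁻ z, ENNReal.ofReal (min (‖z‖ ^ 2) 1) ∂ν < ⊤)
    {s : ℝ} (hs : 0 < s) (t : ℝ) :
    IntegrableOn (fun z => z) {z : Euc d | s < ‖z‖ ∧ ‖z‖ ≤ t} ν := by
  have hfin : ν {z : Euc d | s < ‖z‖ ∧ ‖z‖ ≤ t} < ⊤ := by
    refine (measure_mono fun z hz => ?_).trans_lt
      ((integrable_min_sq_div_sq hν s).measure_ge_lt_top one_pos)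
    have : 1 ≤ ‖z‖ ^ 2 / s ^ 2 := (one_le_div (by positivity)).mpr (by gcongr; exact hz.1.le)
    simpa using this
  refine Measure.integrableOn_of_bounded (M := t) hfin.ne aestronglyMeasurable_id ?_
  exact ae_restrict_of_forall_mem (measurableSet_annulus s t) fun z hz => hz.2

end LevyMeasure

section Compensator

variable {d : ℕ} {ν : Measure (Euc d)} {g : Euc d → ℝ} {y : Euc d}

theorem jumpIntegrand_eq_add_indicator {s t : ℝ} (hst : s ≤ t) (z : Euc d) :
    jumpIntegrand g y s z =
      jumpIntegrand g y t z + {z : Euc d | s < ‖z‖ ∧ ‖z‖ ≤ t}.indicator (fderiv ℝ g y) z := by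
  by_cases hs : ‖z‖ ≤ s
  · simp [jumpIntegrand, hs, hs.trans hst, not_lt.mpr hs]
  · by_cases ht : ‖z‖ ≤ t
    · simp [jumpIntegrand, hs, ht, not_le.mp hs]
    · simp [jumpIntegrand, hs, ht]

theorem integral_jumpIntegrand_eq_add (hν : ∫⁻ z, ENNReal.ofReal (min (‖z‖ ^ 2) 1) ∂ν < ⊤)
    {s t : ℝ} (hs : 0 < s) (hst : s ≤ t) (ht : Integrable (jumpIntegrand g y t) ν) :
    ∫ z, jumpIntegrand g y s z ∂ν =
      ∫ z, jumpIntegrand g y t z ∂ν +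
        fderiv ℝ g y (∫ z in {z : Euc d | s < ‖z‖ ∧ ‖z‖ ≤ t}, z ∂ν) := by
  have hann := integrableOn_annulus hν hs t
  simp_rw [jumpIntegrand_eq_add_indicator hst]
  have hind := (integrable_indicator_iff (measurableSet_annulus s t)).mpr
    ((fderiv ℝ g y).integrable_comp hann)
  rw [integral_add ht hind,
    integral_indicator (measurableSet_annulus s t), (fderiv ℝ g y).integral_comp_comm hann]

theorem fderiv_apply_add_integral_jumpIntegrand_eq_btilde
    (hν : ∫⁻ z, ENNReal.ofReal (min (‖z‖ ^ 2) 1) ∂ν < ⊤) (b : Euc d) {r : ℝ} (hr : 0 < r)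
    (h₁ : Integrable (jumpIntegrand g y 1) ν) (hᵣ : Integrable (jumpIntegrand g y r) ν) :
    fderiv ℝ g y b + ∫ z, jumpIntegrand g y 1 z ∂ν =
      fderiv ℝ g y (btilde b ν r) + ∫ z, jumpIntegrand g y r z ∂ν := by
  unfold btilde
  split_ifs with hr1
  · rw [integral_jumpIntegrand_eq_add hν hr hr1 h₁, map_sub]
    ring
  · rw [integral_jumpIntegrand_eq_add hν one_pos (not_le.mp hr1).le hᵣ, map_add]
    ring

end Compensator

section RescaledGenerator

variable {d : ℕ} {f : Euc d → ℝ} {z₀ : Euc d} {r : ℝ} {ν : Measure (Euc d)}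

theorem abs_sum_mul_fderiv_fderiv_rescale_le {A : Matrix (Fin d) (Fin d) ℝ} (hs : A.IsSymm)
    (hA : ∀ u, 0 ≤ quadForm d A u) (hf : ContDiff ℝ 2 f) {M : ℝ}
    (hM : ∀ x (i j : Fin d),
      |fderiv ℝ (fderiv ℝ f) x (EuclideanSpace.single i 1) (EuclideanSpace.single j 1)| ≤ M)
    (w : Euc d) :
    |∑ i, ∑ j, A i j * fderiv ℝ (fderiv ℝ (rescale f z₀ r)) w
        (EuclideanSpace.single i 1) (EuclideanSpace.single j 1)| ≤
      d * M * ((∑ i, A i i) / r ^ 2) :=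
  (abs_sum_mul_le_of_quadForm_nonneg hs hA fun i j =>
    abs_fderiv_fderiv_rescale_le hf (fun x => hM x i j) w).trans_eq (by ring)

theorem abs_jumpIntegrand_rescale_le (hf : ContDiff ℝ 2 f) {C M : ℝ}
    (hC : ∀ x, ‖fderiv ℝ (fderiv ℝ f) x‖ ≤ C) (hM : ∀ x, |f x| ≤ M) (hr : 0 < r) (y : Euc d)
    {c : ℝ} (hc : 0 < c) (z : Euc d) :
    |jumpIntegrand (rescale f z₀ r) y c z| ≤
      (C / r ^ 2 * c ^ 2 + 2 * M) * min (‖z‖ ^ 2 / c ^ 2) 1 :=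
  abs_jumpIntegrand_le hc (fun _ => hM _) (abs_rescale_add_sub_sub_fderiv_le hf hC hr y) z

theorem integrable_jumpIntegrand_rescale (hν : ∫⁻ z, ENNReal.ofReal (min (‖z‖ ^ 2) 1) ∂ν < ⊤)
    (hf : ContDiff ℝ 2 f) {C M : ℝ} (hC : ∀ x, ‖fderiv ℝ (fderiv ℝ f) x‖ ≤ C)
    (hM : ∀ x, |f x| ≤ M) (hr : 0 < r) (y : Euc d) {c : ℝ} (hc : 0 < c) :
    Integrable (jumpIntegrand (rescale f z₀ r) y c) ν :=
  integrable_jumpIntegrand hν (hf.continuous.comp ((continuous_sub_right z₀).const_smul r⁻¹))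
    (abs_jumpIntegrand_rescale_le hf hC hM hr y hc)

theorem abs_integral_jumpIntegrand_rescale_le
    (hν : ∫⁻ z, ENNReal.ofReal (min (‖z‖ ^ 2) 1) ∂ν < ⊤) (hf : ContDiff ℝ 2 f) {C M : ℝ}
    (hC : ∀ x, ‖fderiv ℝ (fderiv ℝ f) x‖ ≤ C) (hM : ∀ x, |f x| ≤ M) (hr : 0 < r) (y : Euc d) :
    |∫ z, jumpIntegrand (rescale f z₀ r) y r z ∂ν| ≤
      (C + 2 * M) * ∫ z, min (‖z‖ ^ 2 / r ^ 2) 1 ∂ν := by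
  have := abs_integral_le_mul_integral_of_abs_le (integrable_min_sq_div_sq hν r)
    (abs_jumpIntegrand_rescale_le (z₀ := z₀) hf hC hM hr y hr)
  rwa [div_mul_cancel₀ _ (by positivity)] at this

end RescaledGenerator

theorem generator_bound_rescaled_general
    (d : ℕ) (A : Matrix (Fin d) (Fin d) ℝ) (b : Euc d)
    (ν : Measure (Euc d)) (hT : IsLevyTriple d A b ν)
    (f : Euc d → ℝ) (hf : ContDiff ℝ 2 f)
    (M₀ M₁ M₂ : ℝ)
    (hM₀ : ∀ y : Euc d, |f y| ≤ M₀)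
    (hM₁ : ∀ y : Euc d, ‖fderiv ℝ f y‖ ≤ M₁)
    (hM₂ : ∀ (y : Euc d) (i j : Fin d),
      |fderiv ℝ (fderiv ℝ f) y (EuclideanSpace.single i 1) (EuclideanSpace.single j 1)| ≤ M₂)
    (z₀ : Euc d) (r : ℝ) (hr : 0 < r) (y : Euc d) :
    Integrable
      (fun z => rescale f z₀ r (y + z) - rescale f z₀ r y -
        (if ‖z‖ ≤ 1 then fderiv ℝ (rescale f z₀ r) y z else 0)) ν ∧
    |(1 / 2) * (∑ i, ∑ j, A i j *
          fderiv ℝ (fderiv ℝ (rescale f z₀ r)) y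
            (EuclideanSpace.single i 1) (EuclideanSpace.single j 1)) +
        fderiv ℝ (rescale f z₀ r) y b +
        ∫ z, (rescale f z₀ r (y + z) - rescale f z₀ r y -
          (if ‖z‖ ≤ 1 then fderiv ℝ (rescale f z₀ r) y z else 0)) ∂ν| ≤
      ((d : ℝ) * M₂ + M₁ + 2 * M₀) * Phi d A b ν r := by
  obtain ⟨hsymm, hpsd, -, hν⟩ := hT
  have hD2 (x : Euc d) : ‖fderiv ℝ (fderiv ℝ f) x‖ ≤ d * M₂ := by
    have := EuclideanSpace.opNorm_le_card_mul_of_abs_apply_single_single_le _ (hM₂ x)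
    rwa [Fintype.card_fin] at this
  have h₁ := integrable_jumpIntegrand_rescale hν hf hD2 hM₀ hr y (z₀ := z₀) one_pos
  refine ⟨h₁, ?_⟩
  change |_ + _ + ∫ z, jumpIntegrand (rescale f z₀ r) y 1 z ∂ν| ≤ _
  rw [add_assoc, fderiv_apply_add_integral_jumpIntegrand_eq_btilde hν b hr h₁
    (integrable_jumpIntegrand_rescale hν hf hD2 hM₀ hr y hr), ← add_assoc]
  have hdiff := abs_sum_mul_fderiv_fderiv_rescale_le hsymm hpsd hf hM₂ y (z₀ := z₀) (r := r)
  have hdrift := abs_fderiv_rescale_apply_le (hf.differentiable two_ne_zero) hr hM₁ y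
    (btilde b ν r) (z₀ := z₀)
  have hjump := abs_integral_jumpIntegrand_rescale_le hν hf hD2 hM₀ hr y (z₀ := z₀)
  have htr : 0 ≤ (∑ i, A i i) / r ^ 2 :=
    div_nonneg (sum_diag_nonneg_of_quadForm_nonneg hpsd) (by positivity)
  have hmin : 0 ≤ ∫ z, min (‖z‖ ^ 2 / r ^ 2) 1 ∂ν := integral_nonneg fun z => by positivity
  have hb : 0 ≤ ‖btilde b ν r‖ / r := by positivity
  have hdM₂ : 0 ≤ d * M₂ := (norm_nonneg (fderiv ℝ (fderiv ℝ f) 0)).trans (hD2 0)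
  have hM₀0 : 0 ≤ M₀ := (abs_nonneg _).trans (hM₀ 0)
  have hM₁0 : 0 ≤ M₁ := (norm_nonneg _).trans (hM₁ 0)
  unfold Phi
  refine (abs_add_three _ _ _).trans ?_
  rw [abs_mul, abs_of_pos one_half_pos]
  linarith [mul_nonneg hdM₂ htr, mul_nonneg hM₁0 htr, mul_nonneg hM₀0 htr,
    mul_nonneg hM₁0 hmin, mul_nonneg hdM₂ hb, mul_nonneg hM₀0 hb]

/-- from the proof of Lemma 2.10: for a bounded `C²` function `f` with
bounded first and second derivatives, the generator expression applied to the rescaled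
function `f_{z₀,r}` is bounded by `(d M₂ + M₁ + 2 M₀) Φ(r)`. -/
theorem generator_bound_rescaled
    (d : ℕ) (hd : 1 ≤ d) (A : Matrix (Fin d) (Fin d) ℝ) (b : Euc d)
    (ν : Measure (Euc d)) (hT : IsLevyTriple d A b ν)
    (f : Euc d → ℝ) (hf : ContDiff ℝ 2 f)
    (M₀ M₁ M₂ : ℝ)
    (hM₀ : ∀ y : Euc d, |f y| ≤ M₀)
    (hM₁ : ∀ y : Euc d, ‖fderiv ℝ f y‖ ≤ M₁)
    (hM₂ : ∀ (y : Euc d) (i j : Fin d),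
      |fderiv ℝ (fderiv ℝ f) y (EuclideanSpace.single i 1) (EuclideanSpace.single j 1)| ≤ M₂)
    (z₀ : Euc d) (r : ℝ) (hr : 0 < r) (y : Euc d) :
    Integrable
      (fun z => rescale f z₀ r (y + z) - rescale f z₀ r y -
        (if ‖z‖ ≤ 1 then fderiv ℝ (rescale f z₀ r) y z else 0)) ν ∧
    |(1 / 2) * (∑ i, ∑ j, A i j *
          fderiv ℝ (fderiv ℝ (rescale f z₀ r)) y
            (EuclideanSpace.single i 1) (EuclideanSpace.single j 1)) +
        fderiv ℝ (rescale f z₀ r) y b +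
        ∫ z, (rescale f z₀ r (y + z) - rescale f z₀ r y -
          (if ‖z‖ ≤ 1 then fderiv ℝ (rescale f z₀ r) y z else 0)) ∂ν| ≤
      ((d : ℝ) * M₂ + M₁ + 2 * M₀) * Phi d A b ν r :=
  generator_bound_rescaled_general d A b ν hT f hf M₀ M₁ M₂ hM₀ hM₁ hM₂ z₀ r hr y

end
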